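/- arXiv:0909.0471 — 2 statements merged into one kernel-verified Lean document; each statement's English description precedes it below -/
import Mathlib

section
/- If a set of ridges of the 4-cube contains no pair of antipodal edges, then it contains at most four spanning ridges (ridges whose last coordinate is varying). -/
/-!
A spanning ridge of `C^4` is `E × [0,1]` for an edge `E` of `C^3`, and it contains the two
vertical edges `v × [0,1]` over the endpoints `v` of `E`. Let `U` be the set of vertices of `C^3`
whose vertical edge is contained in `A`. Vertical edges over antipodal vertices are antipodal, so
`U` meets each of the four antipodal pairs at most once and `|U| ≤ 4`. The endpoints of an edge
have Hamming weights of different parity, so the spanning ridges of `A` inject into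
`U_even × U_odd`, which has at most `2 · 2 = 4` elements.
-/

namespace Cube

/-- A face of the `d`-cube: `none` = varying coordinate (X), `some b` = fixed at `b`. -/
abbrev Face (d : ℕ) := Fin d → Option Bool

/-- `F` is a `k`-face: exactly `k` varying coordinates. -/
def IsKFace {d : ℕ} (F : Face d) (k : ℕ) : Prop :=
  (Finset.univ.filter fun i => F i = none).card = k

/-- `G` is a subface of `F`: `G` agrees with every fixed coordinate of `F`. -/
def Subface {d : ℕ} (G F : Face d) : Prop := ∀ i b, F i = some b → G i = some b

/-- Antipodal faces: same varying positions, opposite fixed values. -/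
def Antipodal {d : ℕ} (F G : Face d) : Prop := ∀ i, G i = (F i).map (!·)

abbrev Vertex (d : ℕ) := Fin d → Bool

/-- The vertex `v` lies on the face `F`. -/
def VMem {d : ℕ} (v : Vertex d) (F : Face d) : Prop := ∀ i b, F i = some b → v i = b

/-- A set of faces contains the face `G` if `G` is a subface of one of its members. -/
def SetContains {d : ℕ} (A : Set (Face d)) (G : Face d) : Prop := ∃ F ∈ A, Subface G F

end Cube


namespace Cube

open Finset

variable {d : ℕ}

def antipode (v : Vertex d) : Vertex d := fun i => !v i

theorem antipode_involutive : Function.Involutive (antipode (d := d)) := fun v => by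
  funext i
  simp [antipode]

theorem two_mul_card_le_of_antipode_notMem (U : Finset (Vertex d))
    (hU : ∀ v ∈ U, antipode v ∉ U) : 2 * #U ≤ 2 ^ d := by
  have hdisj : Disjoint U (U.image antipode) := by
    refine disjoint_left.2 fun v hv hv' => ?_
    obtain ⟨w, hw, rfl⟩ := mem_image.1 hv'
    exact hU _ hv (by rwa [antipode_involutive w])
  calc 2 * #U = #U + #(U.image antipode) := by
        rw [card_image_of_injective _ antipode_involutive.injective]; ring
    _ = #(U ∪ U.image antipode) := (card_union_of_disjoint hdisj).symm
    _ ≤ Fintype.card (Vertex d) := card_le_univ _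
    _ = 2 ^ d := by simp

def weight (v : Vertex d) : ℕ := #{i | v i = true}

def minVertex (F : Face d) : Vertex d := fun i => (F i).getD false

def maxVertex (F : Face d) : Vertex d := fun i => (F i).getD true

/-- The smallest face containing the vertices `v` and `w`. -/
def spanFace (v w : Vertex d) : Face d := fun i => if v i = w i then some (v i) else none

theorem spanFace_comm (v w : Vertex d) : spanFace v w = spanFace w v := by
  funext i
  by_cases h : v i = w i <;> simp [spanFace, h, eq_comm]

theorem spanFace_minVertex_maxVertex (F : Face d) : spanFace (minVertex F) (maxVertex F) = F := by
  have key : ∀ x : Option Bool,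
      (if x.getD false = x.getD true then some (x.getD false) else none) = x := by decide
  funext i
  exact key (F i)

theorem vMem_minVertex (F : Face d) : VMem (minVertex F) F := fun i b h => by
  simp [minVertex, h]

theorem vMem_maxVertex (F : Face d) : VMem (maxVertex F) F := fun i b h => by
  simp [maxVertex, h]

theorem weight_maxVertex (F : Face d) :
    weight (maxVertex F) = weight (minVertex F) + #{i | F i = none} := by
  simp only [weight, card_filter, ← sum_add_distrib]
  have key : ∀ x : Option Bool, (if x.getD true = true then 1 else 0) =
      (if x.getD false = true then 1 else 0) + if x = none then 1 else 0 := by decide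
  exact sum_congr rfl fun i _ => key (F i)

def prism (F : Face d) : Face (d + 1) := Fin.snoc (α := fun _ => Option Bool) F none

def vertical (v : Vertex d) : Face (d + 1) := prism fun i => some (v i)

theorem card_filter_none_eq (F : Face (d + 1)) :
    #{i | F i = none} = #{i | Fin.init F i = none} + if F (Fin.last d) = none then 1 else 0 := by
  rw [card_filter, card_filter, Fin.sum_univ_castSucc]
  rfl

theorem isKFace_init {F : Face (d + 1)} {k : ℕ} (hF : IsKFace F (k + 1))
    (hlast : F (Fin.last d) = none) : IsKFace (Fin.init F) k := by
  rw [IsKFace, card_filter_none_eq, hlast, if_pos rfl] at hF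
  exact Nat.add_right_cancel hF

theorem prism_init {F : Face (d + 1)} (hlast : F (Fin.last d) = none) :
    prism (Fin.init F) = F := by
  conv_rhs => rw [← Fin.snoc_init_self F, hlast]
  rfl

theorem isKFace_vertical (v : Vertex d) : IsKFace (vertical v) 1 := by
  rw [IsKFace, card_filter_none_eq]
  simp [vertical, prism, Fin.init_snoc]

theorem antipodal_vertical (v : Vertex d) : Antipodal (vertical v) (vertical (antipode v)) := by
  intro i
  induction i using Fin.lastCases <;> simp [vertical, prism, antipode]

theorem subface_vertical {v : Vertex d} {F : Face (d + 1)} (hv : VMem v (Fin.init F))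
    (hlast : F (Fin.last d) = none) : Subface (vertical v) F := by
  intro i b hb
  induction i using Fin.lastCases with
  | last => simp [hlast] at hb
  | cast j => simpa [vertical, prism] using hv j b hb

open Classical in
noncomputable def coveredVertices (A : Set (Face (d + 1))) : Finset (Vertex d) :=
  {v | SetContains A (vertical v)}

theorem exists_prism_spanFace_eq {A : Set (Face (d + 1))} {R : Face (d + 1)} (hRA : R ∈ A)
    (hR : IsKFace R 2) (hlast : R (Fin.last d) = none) :
    ∃ x ∈ {v ∈ coveredVertices A | Even (weight v)},
      ∃ y ∈ {v ∈ coveredVertices A | ¬Even (weight v)}, prism (spanFace x y) = R := by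
  classical
  set E := Fin.init R
  have hcov : ∀ v, VMem v E → v ∈ coveredVertices A := fun v hv =>
    mem_filter.2 ⟨mem_univ _, R, hRA, subface_vertical hv hlast⟩
  have hmin := hcov _ (vMem_minVertex E)
  have hmax := hcov _ (vMem_maxVertex E)
  have hweight : weight (maxVertex E) = weight (minVertex E) + 1 := by
    rw [weight_maxVertex, isKFace_init hR hlast]
  have hspan : prism (spanFace (minVertex E) (maxVertex E)) = R := by
    rw [spanFace_minVertex_maxVertex, prism_init hlast]
  simp only [mem_filter]
  by_cases heven : Even (weight (minVertex E))
  · exact ⟨_, ⟨hmin, heven⟩, _, ⟨hmax, by rwa [hweight, Nat.even_add_one, not_not]⟩, hspan⟩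
  · exact ⟨_, ⟨hmax, by rwa [hweight, Nat.even_add_one]⟩, _, ⟨hmin, heven⟩,
      by rwa [spanFace_comm]⟩

theorem ncard_spanning_le (A : Set (Face (d + 1))) (hA : ∀ R ∈ A, IsKFace R 2) :
    (A ∩ {R | R (Fin.last d) = none}).ncard ≤
      #{v ∈ coveredVertices A | Even (weight v)} * #{v ∈ coveredVertices A | ¬Even (weight v)} := by
  set pairs := {v ∈ coveredVertices A | Even (weight v)} ×ˢ
    {v ∈ coveredVertices A | ¬Even (weight v)}
  have hsub : A ∩ {R | R (Fin.last d) = none} ⊆ pairs.image fun p => prism (spanFace p.1 p.2) := by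
    rintro R ⟨hRA, hlast⟩
    obtain ⟨x, hx, y, hy, rfl⟩ := exists_prism_spanFace_eq hRA (hA R hRA) hlast
    exact mem_image.2 ⟨(x, y), mem_product.2 ⟨hx, hy⟩, rfl⟩
  calc (A ∩ {R | R (Fin.last d) = none}).ncard
      ≤ #(pairs.image fun p => prism (spanFace p.1 p.2)) := by
        rw [← Set.ncard_coe_finset]; exact Set.ncard_le_ncard hsub (finite_toSet _)
    _ ≤ #pairs := card_image_le
    _ = _ := card_product _ _

theorem antipode_notMem_coveredVertices {A : Set (Face (d + 1))}
    (hA : ¬ ∃ e e' : Face (d + 1), IsKFace e 1 ∧ Antipodal e e' ∧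
      SetContains A e ∧ SetContains A e') :
    ∀ v ∈ coveredVertices A, antipode v ∉ coveredVertices A := fun v hv hv' => by
  classical
  exact hA ⟨vertical v, vertical (antipode v), isKFace_vertical v, antipodal_vertical v,
    (mem_filter.1 hv).2, (mem_filter.1 hv').2⟩

theorem card_even_mul_card_odd_le (U : Finset (Vertex 3)) (hU : ∀ v ∈ U, antipode v ∉ U) :
    #{v ∈ U | Even (weight v)} * #{v ∈ U | ¬Even (weight v)} ≤ 4 := by
  have hcard : 2 * #U ≤ 2 ^ 3 := two_mul_card_le_of_antipode_notMem U hU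
  rw [← card_filter_add_card_filter_not (s := U) fun v => Even (weight v)] at hcard
  nlinarith [sq_nonneg ((#{v ∈ U | Even (weight v)} : ℤ) - #{v ∈ U | ¬Even (weight v)})]

end Cube

open Cube

/-- a set of ridges of `C^4` with no pair of antipodal edges contains
at most four spanning ridges. -/
theorem at_most_four_spanning_ridges (A : Set (Face 4))
    (hridges : ∀ R ∈ A, IsKFace R 2)
    (hanti : ¬ ∃ e e' : Face 4, IsKFace e 1 ∧ Antipodal e e' ∧
      SetContains A e ∧ SetContains A e') :
    (A ∩ {R : Face 4 | R 3 = none}).ncard ≤ 4 :=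
  (ncard_spanning_le A hridges).trans
    (card_even_mul_card_odd_le _ (antipode_notMem_coveredVertices hanti))
end

section
/- For d ≥ 4, with the four asterisk vertices v_1 = αβγ, v_2 = ᾱβ̄γ, v_3 = αβ̄γ̄, v_4 = ᾱβγ̄ (where α, β, γ are all-zero blocks of lengths as nearly equal as possible summing to d, and bars denote complementation), every ridge of C^d is covered by at most two of the sets Ast(v_1),...,Ast(v_4), and the number of ridges covered by exactly two of them equals d(d-3)/3 if d ≡ 0 (mod 3) and (d-1)(d-2)/3 if d ≡ 1, 2 (mod 3). -/
open Cube
open scoped Classical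

/-!
Each coordinate splits the four asterisk vertices two against two: on the blocks `α, β, γ`
the values of `v₁, …, v₄` are `0101`, `0110`, `0011`. Fixing a single coordinate therefore
already leaves only two of them. Two coordinates with the same pattern are met by exactly
two vertices when they are fixed to equal values (and by none otherwise), while two distinct
patterns realise each of the four value pairs exactly once. So the doubly covered ridges are
the faces fixing a pair of coordinates of one block to a common value, and there are
`2 (C(|α|, 2) + C(|β|, 2) + C(|γ|, 2))` of them.
-/

open Finset

lemma two_mul_choose_two (n : ℕ) : 2 * n.choose 2 = n * (n - 1) := by
  rw [Nat.choose_two_right, Nat.mul_div_cancel' (Nat.even_mul_pred_self n).two_dvd]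

lemma card_filter_le_val_lt {n : ℕ} (l r : ℕ) (hr : r ≤ n) :
    #{i : Fin n | l ≤ (i : ℕ) ∧ (i : ℕ) < r} = r - l := by
  rw [← Nat.card_Ico, ← card_map Fin.valEmbedding]
  congr 1
  ext m
  simp only [mem_map, mem_filter, mem_univ, true_and, Fin.valEmbedding_apply, Fin.exists_iff,
    exists_and_left, exists_prop, exists_eq_right_right, mem_Ico, and_iff_left_iff_imp, and_imp]
  omega

lemma three_mul_two_mul_sum_choose_two {d a b c : ℕ} (hd : 3 ≤ d) (ha : a = (d + 2) / 3)
    (hc : c = d / 3) (hb : b = d - a - c) :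
    3 * (2 * (a.choose 2 + b.choose 2 + c.choose 2)) =
      if d % 3 = 0 then d * (d - 3) else (d - 1) * (d - 2) := by
  subst hb ha hc
  obtain ⟨k, r, hr, rfl⟩ : ∃ k r, r < 3 ∧ d = 3 * k + r :=
    ⟨d / 3, d % 3, d.mod_lt (by norm_num), (Nat.div_add_mod d 3).symm⟩
  have hk : 1 ≤ k := by omega
  simp only [mul_add, two_mul_choose_two]
  interval_cases r
  · rw [if_pos (by omega), show (3 * k + 0 + 2) / 3 = k by omega,
      show (3 * k + 0) / 3 = k by omega, show 3 * k + 0 - k - k = k by omega]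
    zify [hk, hd]
    ring
  · rw [if_neg (by omega), show (3 * k + 1 + 2) / 3 = k + 1 by omega,
      show (3 * k + 1) / 3 = k by omega, show 3 * k + 1 - (k + 1) - k = k by omega]
    simp only [Nat.add_sub_cancel]
    zify [hk, (by omega : 2 ≤ 3 * k + 1)]
    ring
  · rw [if_neg (by omega), show (3 * k + 2 + 2) / 3 = k + 1 by omega,
      show (3 * k + 2) / 3 = k by omega, show 3 * k + 2 - (k + 1) - k = k + 1 by omega]
    simp only [Nat.add_sub_cancel]
    zify [hk, (by omega : 1 ≤ 3 * k + 2)]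
    ring

namespace Cube

variable {d : ℕ}

def fixedCoords (F : Face d) : Finset (Fin d) := {i | F i ≠ none}

lemma isKFace_iff_card_fixedCoords {F : Face d} {k : ℕ} (hk : k ≤ d) :
    IsKFace F k ↔ #(fixedCoords F) = d - k := by
  have := card_filter_add_card_filter_not (s := univ) (p := fun i => F i = none)
  rw [card_univ, Fintype.card_fin] at this
  unfold IsKFace fixedCoords
  simp only [ne_eq]
  omega

lemma isKFace_sub_two_iff (hd : 2 ≤ d) {F : Face d} :
    IsKFace F (d - 2) ↔ #(fixedCoords F) = 2 := by
  rw [isKFace_iff_card_fixedCoords (Nat.sub_le d 2), Nat.sub_sub_self hd]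

lemma exists_eq_some_of_mem_fixedCoords {F : Face d} {i : Fin d} (hi : i ∈ fixedCoords F) :
    ∃ x, F i = some x :=
  Option.ne_none_iff_exists'.mp (mem_filter.mp hi).2

lemma vMem_iff_forall_mem_fixedCoords {w : Vertex d} {F : Face d} :
    VMem w F ↔ ∀ i ∈ fixedCoords F, F i = some (w i) := by
  simp only [VMem, fixedCoords, mem_filter, mem_univ, true_and]
  refine ⟨fun h i hi => ?_, fun h i b hb => ?_⟩
  · obtain ⟨b, hb⟩ := Option.ne_none_iff_exists'.mp hi
    rw [hb, h i b hb]
  · simpa [hb] using (h i (by simp [hb])).symm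

lemma card_filter_vMem_le {ι : Type*} [Fintype ι] (v : ι → Vertex d) {F : Face d} {p : Fin d}
    {x : Bool} (hp : F p = some x) :
    #{j | VMem (v j) F} ≤ #{j | v j p = x} :=
  card_le_card fun j => by simpa using fun h : VMem (v j) F => h p x hp

def faceFixing (s : Finset (Fin d)) (x : Bool) : Face d := fun i => if i ∈ s then some x else none

@[simp]
lemma fixedCoords_faceFixing (s : Finset (Fin d)) (x : Bool) :
    fixedCoords (faceFixing s x) = s := by
  ext i; simp [fixedCoords, faceFixing]

lemma eq_faceFixing {F : Face d} {x : Bool} (h : ∀ i ∈ fixedCoords F, F i = some x) :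
    F = faceFixing (fixedCoords F) x := by
  funext i
  by_cases hi : i ∈ fixedCoords F
  · simp [faceFixing, hi, h i hi]
  · have hF : F i = none := by simpa [fixedCoords] using hi
    simp [faceFixing, hi, hF]

lemma injOn_faceFixing :
    Set.InjOn (fun sx : Finset (Fin d) × Bool => faceFixing sx.1 sx.2) {sx | sx.1.Nonempty} := by
  rintro ⟨s, x⟩ ⟨i, hi⟩ ⟨t, y⟩ - h
  have hs : s = t := by simpa using congrArg fixedCoords h
  have hx := congrFun h i
  simp_all [faceFixing]

/-- `asteriskColumn k j` is the value of `v_{j+1}` on the block `α`, `β`, `γ` (`k = 0, 1, 2`). -/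
def asteriskColumn : Fin 3 → Fin 4 → Bool :=
  ![![false, true, false, true], ![false, true, true, false], ![false, false, true, true]]

def block (a b : ℕ) (i : Fin d) : Fin 3 := if i < a then 0 else if i < a + b then 1 else 2

def asterisk (a b : ℕ) : Fin 4 → Vertex d := fun j i => asteriskColumn (block a b i) j

lemma card_asteriskColumn_eq (k : Fin 3) (x : Bool) : #{j | asteriskColumn k j = x} = 2 := by
  revert k x; decide

lemma card_asteriskColumn_eq_two_iff (k l : Fin 3) (x y : Bool) :
    #{j | asteriskColumn k j = x ∧ asteriskColumn l j = y} = 2 ↔ k = l ∧ x = y := by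
  revert k l x y; decide

lemma card_filter_vMem_asterisk_le_two (a b : ℕ) {F : Face d} (hF : (fixedCoords F).Nonempty) :
    #{j | VMem (asterisk a b j) F} ≤ 2 := by
  obtain ⟨p, hp⟩ := hF
  obtain ⟨x, hx⟩ := exists_eq_some_of_mem_fixedCoords hp
  calc #{j | VMem (asterisk a b j) F} ≤ #{j | asterisk a b j p = x} := card_filter_vMem_le _ hx
    _ = 2 := card_asteriskColumn_eq _ _

lemma card_filter_vMem_asterisk_eq_two_iff (a b : ℕ) {F : Face d} {p q : Fin d}
    (hF : fixedCoords F = {p, q}) :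
    #{j | VMem (asterisk a b j) F} = 2 ↔ block a b p = block a b q ∧ F p = F q := by
  obtain ⟨x, hx⟩ := exists_eq_some_of_mem_fixedCoords (hF ▸ mem_insert_self p {q})
  obtain ⟨y, hy⟩ :=
    exists_eq_some_of_mem_fixedCoords (hF ▸ mem_insert_of_mem (mem_singleton_self q))
  have hcover : ∀ j, VMem (asterisk a b j) F ↔
      asteriskColumn (block a b p) j = x ∧ asteriskColumn (block a b q) j = y := by
    intro j
    simp only [vMem_iff_forall_mem_fixedCoords, hF, forall_mem_insert, mem_singleton, forall_eq,
      hx, hy, Option.some_inj, asterisk]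
    exact and_congr eq_comm eq_comm
  rw [filter_congr fun j _ => hcover j, card_asteriskColumn_eq_two_iff, hx, hy, Option.some_inj]

lemma eq_asterisk {a b : ℕ} {v : Fin 4 → Vertex d}
    (hv₁ : v 0 = fun _ => false)
    (hv₂ : v 1 = fun i => decide (i.val < a + b))
    (hv₃ : v 2 = fun i => decide (a ≤ i.val))
    (hv₄ : v 3 = fun i => decide (i.val < a ∨ a + b ≤ i.val)) :
    v = asterisk a b := by
  rw [show v = ![v 0, v 1, v 2, v 3] by ext j : 1; fin_cases j <;> rfl, hv₁, hv₂, hv₃, hv₄]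
  funext j i
  unfold asterisk block
  fin_cases j <;> split_ifs <;> simp [asteriskColumn] <;> omega

lemma card_filter_block_eq (a b : ℕ) (hab : a + b ≤ d) (k : Fin 3) :
    #{i : Fin d | block a b i = k} = ![a, b, d - a - b] k := by
  have hblock : ∀ i : Fin d,
      block a b i = k ↔ ![0, a, a + b] k ≤ (i : ℕ) ∧ (i : ℕ) < ![a, a + b, d] k := by
    intro i
    have := i.isLt
    unfold block
    fin_cases k <;> split_ifs <;> simp <;> omega
  rw [filter_congr fun i _ => hblock i, card_filter_le_val_lt _ _
    (by fin_cases k <;> dsimp <;> omega)]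
  fin_cases k <;> dsimp <;> omega

def sameBlockPairs (a b : ℕ) : Finset (Finset (Fin d)) :=
  univ.biUnion fun k => powersetCard 2 {i | block a b i = k}

lemma mem_sameBlockPairs {a b : ℕ} {s : Finset (Fin d)} :
    s ∈ sameBlockPairs a b ↔ #s = 2 ∧ ∃ k, ∀ i ∈ s, block a b i = k := by
  simp only [sameBlockPairs, mem_biUnion, mem_univ, true_and, mem_powersetCard, subset_iff,
    mem_filter]
  tauto

lemma card_sameBlockPairs (a b : ℕ) (hab : a + b ≤ d) :
    #(sameBlockPairs (d := d) a b) = a.choose 2 + b.choose 2 + (d - a - b).choose 2 := by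
  rw [sameBlockPairs, card_biUnion, Fin.sum_univ_three]
  · simp [card_powersetCard, card_filter_block_eq a b hab]
  · intro k _ l _ hkl
    refine disjoint_left.mpr fun s hk hl => ?_
    obtain ⟨i, hi⟩ := card_pos.mp (by rw [(mem_powersetCard.mp hk).2]; norm_num)
    have hik := mem_filter.mp ((mem_powersetCard.mp hk).1 hi)
    have hil := mem_filter.mp ((mem_powersetCard.mp hl).1 hi)
    exact hkl (hik.2.symm.trans hil.2)

lemma setOf_isKFace_card_vMem_asterisk_eq_two (a b : ℕ) (hd : 2 ≤ d) :
    {R : Face d | IsKFace R (d - 2) ∧ #{j | VMem (asterisk a b j) R} = 2} =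
      ((sameBlockPairs a b ×ˢ univ).image fun sx => faceFixing sx.1 sx.2 : Finset (Face d)) := by
  ext R
  simp only [Set.mem_ofPred_eq, mem_coe, mem_image, mem_product, mem_univ, and_true,
    isKFace_sub_two_iff hd, Prod.exists]
  constructor
  · rintro ⟨hR, hcover⟩
    obtain ⟨p, q, -, hF⟩ := card_eq_two.mp hR
    obtain ⟨hblock, hval⟩ := (card_filter_vMem_asterisk_eq_two_iff a b hF).mp hcover
    obtain ⟨x, hx⟩ := exists_eq_some_of_mem_fixedCoords (hF ▸ mem_insert_self p {q})
    refine ⟨fixedCoords R, x, mem_sameBlockPairs.mpr ⟨hR, block a b p, ?_⟩,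
      (eq_faceFixing ?_).symm⟩
    · simp [hF, hblock]
    · simp [hF, hx, ← hval]
  · rintro ⟨s, x, hs, rfl⟩
    obtain ⟨hcard, k, hk⟩ := mem_sameBlockPairs.mp hs
    obtain ⟨p, q, -, rfl⟩ := card_eq_two.mp hcard
    refine ⟨by simpa using hcard, (card_filter_vMem_asterisk_eq_two_iff a b
      (fixedCoords_faceFixing _ _)).mpr ⟨?_, by simp [faceFixing]⟩⟩
    rw [hk p (by simp), hk q (by simp)]

lemma ncard_setOf_isKFace_card_vMem_asterisk_eq_two (a b : ℕ) (hd : 2 ≤ d) :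
    {R : Face d | IsKFace R (d - 2) ∧ #{j | VMem (asterisk a b j) R} = 2}.ncard =
      2 * #(sameBlockPairs (d := d) a b) := by
  have hinj : Set.InjOn (fun sx : Finset (Fin d) × Bool => faceFixing sx.1 sx.2)
      ↑(sameBlockPairs (d := d) a b ×ˢ (univ : Finset Bool)) :=
    injOn_faceFixing.mono fun sx hsx => card_pos.mp <| by
      rw [(mem_sameBlockPairs.mp (mem_product.mp (mem_coe.mp hsx)).1).1]; norm_num
  rw [setOf_isKFace_card_vMem_asterisk_eq_two a b hd, Set.ncard_coe_finset,
    card_image_of_injOn hinj, card_product, card_univ, Fintype.card_bool, mul_comm]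

end Cube

/-- with the four asterisk vertices built from the all-zero blocks
`α, β, γ` (of nearly equal lengths summing to `d`) and their complements, every
ridge lies in at most two of the four asterisk sets, and the number of
doubly-covered ridges is `d(d-3)/3` if `3 ∣ d` and `(d-1)(d-2)/3` otherwise. -/
theorem asterisk_double_cover_count (d : ℕ) (hd : 4 ≤ d)
    (a b c : ℕ) (ha : a = (d + 2) / 3) (hc : c = d / 3) (hb : b = d - a - c)
    (v : Fin 4 → Vertex d)
    (hv₁ : v 0 = fun _ => false)
    (hv₂ : v 1 = fun i => decide (i.val < a + b))
    (hv₃ : v 2 = fun i => decide (a ≤ i.val))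
    (hv₄ : v 3 = fun i => decide (i.val < a ∨ a + b ≤ i.val)) :
    (∀ R : Face d, IsKFace R (d - 2) →
      (Finset.univ.filter fun j : Fin 4 => VMem (v j) R).card ≤ 2) ∧
    (3 * {R : Face d | IsKFace R (d - 2) ∧
        (Finset.univ.filter fun j : Fin 4 => VMem (v j) R).card = 2}.ncard =
      if d % 3 = 0 then d * (d - 3) else (d - 1) * (d - 2)) := by
  obtain rfl := eq_asterisk hv₁ hv₂ hv₃ hv₄
  refine ⟨fun R hR => card_filter_vMem_asterisk_le_two a b ?_, ?_⟩
  · exact card_pos.mp (by rw [(isKFace_sub_two_iff (by omega)).mp hR]; norm_num)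
  rw [ncard_setOf_isKFace_card_vMem_asterisk_eq_two a b (by omega),
    card_sameBlockPairs a b (by omega), show d - a - b = c by omega]
  exact three_mul_two_mul_sum_choose_two (by omega) ha hc hb
end
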